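/- arXiv:1507.05463 — 4 statements merged into one kernel-verified Lean document; each statement's English description precedes it below -/
import Mathlib

section
/- Let {A,C} and {B,D} be splits of a connected finite simple graph G such that |A ∩ B| ≥ 2 and A ∪ B ≠ V(G). Then {A ∩ B, C ∪ D} is a split of G. -/
open scoped Classical

/-- The set of neighbors of `X` in `V(G) ∖ X`. -/
def extNbhd {V : Type*} (G : SimpleGraph V) (X : Set V) : Set V :=
  {v | v ∉ X ∧ ∃ x ∈ X, G.Adj v x}

/-- The set of neighbors of `X ⊆ C` inside `C ∖ X`, i.e. relative to the induced
subgraph `G[C]`. -/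
def extNbhdIn {V : Type*} (G : SimpleGraph V) (C X : Set V) : Set V :=
  {v | v ∈ C ∧ v ∉ X ∧ ∃ x ∈ X, G.Adj v x}

/-- `{A, B}` is a split of `G`: a bipartition of the vertex set such that every vertex
of `N(B)` has the same neighborhood in `N(A)`. -/
def IsSplit {V : Type*} (G : SimpleGraph V) (A B : Set V) : Prop :=
  A ∪ B = Set.univ ∧ Disjoint A B ∧
    ∀ a₁ ∈ extNbhd G B, ∀ a₂ ∈ extNbhd G B, ∀ b ∈ extNbhd G A,
      (G.Adj a₁ b ↔ G.Adj a₂ b)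

/-- `{A, C ∖ A}` is a split of the induced subgraph `G[C]`. -/
def IsSplitIn {V : Type*} (G : SimpleGraph V) (C A : Set V) : Prop :=
  A ⊆ C ∧
    ∀ a₁ ∈ extNbhdIn G C (C \ A), ∀ a₂ ∈ extNbhdIn G C (C \ A),
      ∀ b ∈ extNbhdIn G C A, (G.Adj a₁ b ↔ G.Adj a₂ b)

/-- `A` is a split-module of `G`: either `A` is the whole vertex set, or empty, or there is
a connected component of `G` (with vertex set `C = c.supp`) such that `{A, C ∖ A}` is a
split of `G[C]`. -/
def IsSplitModule {V : Type*} (G : SimpleGraph V) (A : Set V) : Prop :=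
  A = Set.univ ∨ A = ∅ ∨ ∃ c : G.ConnectedComponent, IsSplitIn G c.supp A

/-!
A split `{A, Aᶜ}` amounts to the two frontiers `N(Aᶜ) ⊆ A` and `N(A) ⊆ Aᶜ` being completely
joined. So it suffices to show that a vertex `a ∈ A ∩ B` with a neighbour outside `A ∩ B` is
adjacent to every `b ∉ A` with a neighbour `z ∈ A ∩ B` (the case `b ∉ B` is symmetric). If `a`
has a neighbour outside `A`, this is the join of the split `{A, Aᶜ}`. Otherwise `a` lies on the
frontier of `B`, so the whole frontier `N(B)` is adjacent to `a` and hence contained in `A`.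
This is impossible: walking in the connected graph from a vertex outside `A ∪ B` to `z`, the
first vertex `u ∉ A ∪ B` before entering `A ∪ B` lies in `N(B)`, either directly or because it
lies in `N(A)` and is therefore adjacent to `z ∈ N(Aᶜ) ∩ B`.
-/

section

variable {V : Type*} {G : SimpleGraph V} {A B : Set V}

theorem IsSplit.compl_eq (h : IsSplit G A B) : Aᶜ = B :=
  IsCompl.compl_eq ⟨h.2.1, codisjoint_iff.mpr h.1⟩

theorem IsSplit.adj {a b : V} (h : IsSplit G A B) (ha : a ∈ extNbhd G B)
    (hb : b ∈ extNbhd G A) : G.Adj a b := by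
  obtain ⟨hbA, a₀, ha₀, hba₀⟩ := hb
  have ha₀B : a₀ ∈ extNbhd G B :=
    ⟨Set.disjoint_left.mp h.2.1 ha₀, b, h.compl_eq ▸ hbA, hba₀.symm⟩
  exact (h.2.2 a₀ ha₀B a ha b ⟨hbA, a₀, ha₀, hba₀⟩).mp hba₀.symm

theorem isSplit_compl_of_adj (h : ∀ a ∈ extNbhd G Aᶜ, ∀ b ∈ extNbhd G A, G.Adj a b) :
    IsSplit G A Aᶜ :=
  ⟨Set.union_compl_self A, disjoint_compl_right,
    fun a₁ h₁ a₂ h₂ b hb => iff_of_true (h a₁ h₁ b hb) (h a₂ h₂ b hb)⟩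

theorem not_extNbhd_subset (hconn : G.Connected) (hA : IsSplit G A Aᶜ)
    (hAB : A ∪ B ≠ Set.univ) {z : V} (hzB : z ∈ B) (hz : z ∈ extNbhd G Aᶜ) :
    ¬extNbhd G B ⊆ A := by
  intro hsub
  obtain ⟨w, hw⟩ := (Set.ne_univ_iff_exists_notMem _).mp hAB
  obtain ⟨d, -, hu, hy⟩ :=
    (hconn w z).some.exists_boundary_dart (A ∪ B)ᶜ hw (not_not.mpr (Or.inr hzB))
  obtain ⟨huA, huB⟩ := not_or.mp hu
  rcases not_not.mp hy with hyA | hyB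
  · have hzu : G.Adj z d.fst := hA.adj hz ⟨huA, d.snd, hyA, d.adj⟩
    exact huA (hsub ⟨huB, z, hzB, hzu.symm⟩)
  · exact huA (hsub ⟨huB, d.snd, hyB, d.adj⟩)

theorem adj_of_mem_extNbhd_compl_inter (hconn : G.Connected) (hA : IsSplit G A Aᶜ)
    (hB : IsSplit G B Bᶜ) (hAB : A ∪ B ≠ Set.univ) {a b z : V}
    (ha : a ∈ extNbhd G (A ∩ B)ᶜ) (hbA : b ∉ A) (hz : z ∈ A ∩ B) (hbz : G.Adj b z) :
    G.Adj a b := by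
  obtain ⟨haAB, x, hxAB, hax⟩ := ha
  obtain ⟨haA, haB⟩ := not_not.mp haAB
  by_cases hnbr : ∃ c ∉ A, G.Adj a c
  · obtain ⟨c, hcA, hac⟩ := hnbr
    exact hA.adj ⟨not_not.mpr haA, c, hcA, hac⟩ ⟨hbA, z, hz.1, hbz⟩
  push Not at hnbr
  have hxA : x ∈ A := by_contra fun hxA => hnbr x hxA hax
  have haB' : a ∈ extNbhd G Bᶜ := ⟨not_not.mpr haB, x, fun hxB => hxAB ⟨hxA, hxB⟩, hax⟩
  have hsub : extNbhd G B ⊆ A := fun v hv => by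
    by_contra hvA
    exact hnbr v hvA (hB.adj haB' hv)
  exact absurd hsub
    (not_extNbhd_subset hconn hA hAB hz.2 ⟨not_not.mpr hz.1, b, hbA, hbz.symm⟩)

end

theorem splitIntersection_general {V : Type*} (G : SimpleGraph V)
    (hconn : G.Connected) (A C B D : Set V)
    (hAC : IsSplit G A C) (hBD : IsSplit G B D)
    (hne : A ∪ B ≠ Set.univ) :
    IsSplit G (A ∩ B) (C ∪ D) := by
  obtain rfl := hAC.compl_eq
  obtain rfl := hBD.compl_eq
  rw [← Set.compl_inter]
  refine isSplit_compl_of_adj fun a ha b ⟨hb, z, hz, hbz⟩ => ?_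
  rcases not_and_or.mp hb with hbA | hbB
  · exact adj_of_mem_extNbhd_compl_inter hconn hAC hBD hne ha hbA hz hbz
  · rw [Set.inter_comm] at ha hz
    exact adj_of_mem_extNbhd_compl_inter hconn hBD hAC (Set.union_comm A B ▸ hne) ha hbB hz hbz

/-- Let `{A,C}` and `{B,D}` be splits of a connected finite simple
graph `G` such that `|A ∩ B| ≥ 2` and `A ∪ B ≠ V(G)`. Then `{A ∩ B, C ∪ D}` is a
split of `G`. -/
theorem splitIntersection {V : Type*} [Fintype V] (G : SimpleGraph V)
    (hconn : G.Connected) (A C B D : Set V)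
    (hAC : IsSplit G A C) (hBD : IsSplit G B D)
    (hcard : 2 ≤ (A ∩ B).ncard) (hne : A ∪ B ≠ Set.univ) :
    IsSplit G (A ∩ B) (C ∪ D) :=
  splitIntersection_general G hconn A C B D hAC hBD hne
end

section
/- If A and B are overlapping split-modules of a connected finite simple graph G = (V,E), then A ∪ B is also a split-module of G. Moreover, if additionally A ∪ B ≠ V, then A ∩ B is also a split-module of G. -/
open scoped Classical

/-!
For connected `G`, a split-module is a set `X` whose frontier (the vertices of `X` with a
neighbour outside `X`) is complete to `N(X)`. For `A ∪ B`, a frontier vertex of `A ∖ B` reaches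
`N(A ∪ B)` through a vertex of `A ∩ B` on the frontier of `B`, found on an edge leaving `A ∩ B`.
For `A ∩ B`, an edge entering `V ∖ (A ∪ B)` yields a neighbour outside `A ∪ B` of every frontier
vertex of `A ∩ B`, which puts it on the frontier of both `A` and `B`.
-/

/-- `{X, V ∖ X}` is a split of `G`. -/
def IsSplitSet {V : Type*} (G : SimpleGraph V) (X : Set V) : Prop :=
  ∀ a ∈ X, ∀ b ∈ extNbhd G X, (∃ c ∉ X, G.Adj a c) → G.Adj a b

namespace SimpleGraph

variable {V : Type*} {G : SimpleGraph V}

lemma Preconnected.exists_adj_of_mem_of_notMem (hG : G.Preconnected) {X : Set V} {x y : V}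
    (hx : x ∈ X) (hy : y ∉ X) : ∃ u ∈ X, ∃ v ∉ X, G.Adj u v := by
  obtain ⟨w⟩ := hG x y
  obtain ⟨d, -, hd₁, hd₂⟩ := w.exists_boundary_dart X hx hy
  exact ⟨d.fst, hd₁, d.snd, hd₂, d.adj⟩

lemma Preconnected.supp_eq_univ (hG : G.Preconnected) (c : G.ConnectedComponent) :
    c.supp = Set.univ := by
  obtain ⟨w, rfl⟩ := c.exists_rep
  exact Set.eq_univ_of_forall fun v => ConnectedComponent.sound (hG v w)

end SimpleGraph

open SimpleGraph

section

variable {V : Type*} {G : SimpleGraph V} {A B : Set V}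

lemma extNbhdIn_univ (X : Set V) : extNbhdIn G Set.univ X = extNbhd G X := by
  ext v
  simp [extNbhdIn, extNbhd]

lemma isSplitIn_univ_iff : IsSplitIn G Set.univ A ↔ IsSplitSet G A := by
  simp only [IsSplitIn, IsSplitSet, extNbhdIn_univ, ← Set.compl_eq_univ_sdiff,
    Set.subset_univ, true_and]
  constructor
  · rintro h a ha b ⟨hb, u, hu, hbu⟩ ⟨c, hc, hac⟩
    have hu' : u ∈ extNbhd G Aᶜ := ⟨not_not_intro hu, b, hb, hbu.symm⟩
    exact (h u hu' a ⟨not_not_intro ha, c, hc, hac⟩ b ⟨hb, u, hu, hbu⟩).1 hbu.symm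
  · rintro h a₁ ⟨ha₁, c₁, hc₁, hac₁⟩ a₂ ⟨ha₂, c₂, hc₂, hac₂⟩ b hb
    exact iff_of_true (h a₁ (not_not.1 ha₁) b hb ⟨c₁, hc₁, hac₁⟩)
      (h a₂ (not_not.1 ha₂) b hb ⟨c₂, hc₂, hac₂⟩)

lemma SimpleGraph.Connected.isSplitModule_iff (hG : G.Connected) :
    IsSplitModule G A ↔ IsSplitSet G A := by
  have hsupp := hG.preconnected.supp_eq_univ
  constructor
  · rintro (rfl | rfl | ⟨c, h⟩)
    · exact fun _ _ b hb _ => absurd (Set.mem_univ b) hb.1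
    · exact fun a ha => absurd ha (Set.notMem_empty a)
    · rwa [hsupp, isSplitIn_univ_iff] at h
  · intro h
    obtain ⟨v⟩ := hG.nonempty
    exact Or.inr (Or.inr ⟨G.connectedComponentMk v, by rwa [hsupp, isSplitIn_univ_iff]⟩)

lemma IsSplitSet.exists_inter_adj_notMem_right (hG : G.Preconnected) (hA : IsSplitSet G A)
    {p c : V} (hp : p ∈ A ∩ B) (hc : c ∈ extNbhd G A) (hcB : c ∉ B) :
    ∃ t ∈ A ∩ B, ∃ z ∉ B, G.Adj t z := by
  obtain ⟨x, hx, y, hy, hxy⟩ := hG.exists_adj_of_mem_of_notMem hp fun h => hcB h.2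
  by_cases hyB : y ∈ B
  · exact ⟨x, hx, c, hcB, hA x hx.1 c hc ⟨y, fun h => hy ⟨h, hyB⟩, hxy⟩⟩
  · exact ⟨x, hx, y, hyB, hxy⟩

lemma IsSplitSet.adj_of_mem_union (hG : G.Preconnected) (hA : IsSplitSet G A)
    (hB : IsSplitSet G B) (hAB : (A ∩ B).Nonempty) {a b c : V} (ha : a ∈ A)
    (hb : b ∈ extNbhd G (A ∪ B)) (hc : c ∉ A ∪ B) (hac : G.Adj a c) : G.Adj a b := by
  obtain ⟨hbAB, u, hu, hbu⟩ := hb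
  have hbA : b ∉ A := fun h => hbAB (.inl h)
  have hbB : b ∉ B := fun h => hbAB (.inr h)
  have hcA : c ∉ A := fun h => hc (.inl h)
  have hcB : c ∉ B := fun h => hc (.inr h)
  rcases hu with huA | huB
  · exact hA a ha b ⟨hbA, u, huA, hbu⟩ ⟨c, hcA, hac⟩
  by_cases haB : a ∈ B
  · exact hB a haB b ⟨hbB, u, huB, hbu⟩ ⟨c, hcB, hac⟩
  obtain ⟨p, hp⟩ := hAB
  obtain ⟨t, ht, z, hz, htz⟩ := hA.exists_inter_adj_notMem_right hG hp ⟨hcA, a, ha, hac.symm⟩ hcB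
  have htb : G.Adj t b := hB t ht.2 b ⟨hbB, u, huB, hbu⟩ ⟨z, hz, htz⟩
  exact hA a ha b ⟨hbA, t, ht.1, htb.symm⟩ ⟨c, hcA, hac⟩

lemma IsSplitSet.union (hG : G.Preconnected) (hA : IsSplitSet G A) (hB : IsSplitSet G B)
    (hAB : (A ∩ B).Nonempty) : IsSplitSet G (A ∪ B) := by
  rintro a (ha | ha) b hb ⟨c, hc, hac⟩
  · exact hA.adj_of_mem_union hG hB hAB ha hb hc hac
  · rw [Set.union_comm] at hb hc
    exact hB.adj_of_mem_union hG hA (Set.inter_comm A B ▸ hAB) ha hb hc hac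

lemma IsSplitSet.exists_adj_notMem_union (hG : G.Preconnected) (hA : IsSplitSet G A)
    (hB : IsSplitSet G B) {s a c u b : V} (hs : s ∉ A ∪ B) (ha : a ∈ A) (hc : c ∉ A)
    (hac : G.Adj a c) (huA : u ∈ A) (huB : u ∈ B) (hb : b ∉ B) (hub : G.Adj u b) :
    ∃ s' ∉ A ∪ B, G.Adj a s' := by
  obtain ⟨s', hs', w, hw, hs'w⟩ :=
    hG.exists_adj_of_mem_of_notMem (X := (A ∪ B)ᶜ) hs fun h => h (.inl ha)
  have hs'A : s' ∉ A := fun h => hs' (.inl h)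
  refine ⟨s', hs', ?_⟩
  rcases not_not.1 hw with hwA | hwB
  · exact hA a ha s' ⟨hs'A, w, hwA, hs'w⟩ ⟨c, hc, hac⟩
  · have hus' : G.Adj u s' := hB u huB s' ⟨fun h => hs' (.inr h), w, hwB, hs'w⟩ ⟨b, hb, hub⟩
    exact hA a ha s' ⟨hs'A, u, huA, hus'.symm⟩ ⟨c, hc, hac⟩

lemma IsSplitSet.adj_of_notMem_right (hG : G.Preconnected) (hA : IsSplitSet G A)
    (hB : IsSplitSet G B) {s a b c : V} (hs : s ∉ A ∪ B) (ha : a ∈ A ∩ B)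
    (hb : b ∈ extNbhd G (A ∩ B)) (hbB : b ∉ B) (hc : c ∉ A ∩ B) (hac : G.Adj a c) :
    G.Adj a b := by
  obtain ⟨-, u, hu, hbu⟩ := hb
  have hb' : b ∈ extNbhd G B := ⟨hbB, u, hu.2, hbu⟩
  by_cases hcB : c ∈ B
  · obtain ⟨s', hs', has'⟩ := hA.exists_adj_notMem_union hG hB hs ha.1
      (fun h => hc ⟨h, hcB⟩) hac hu.1 hu.2 hbB hbu.symm
    exact hB a ha.2 b hb' ⟨s', fun h => hs' (.inr h), has'⟩
  · exact hB a ha.2 b hb' ⟨c, hcB, hac⟩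

lemma IsSplitSet.inter (hG : G.Preconnected) (hA : IsSplitSet G A) (hB : IsSplitSet G B)
    (hAB : A ∪ B ≠ Set.univ) : IsSplitSet G (A ∩ B) := by
  obtain ⟨s, hs⟩ := (Set.ne_univ_iff_exists_notMem _).1 hAB
  rintro a ha b hb ⟨c, hc, hac⟩
  by_cases hbB : b ∈ B
  · have hbA : b ∉ A := fun h => hb.1 ⟨h, hbB⟩
    rw [Set.union_comm] at hs
    rw [Set.inter_comm] at ha hb hc
    exact hB.adj_of_notMem_right hG hA hs ha hb hbA hc hac
  · exact hA.adj_of_notMem_right hG hB hs ha hb hbB hc hac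

end

theorem splitModule_union_inter_general {V : Type*} (G : SimpleGraph V)
    (hconn : G.Connected) (A B : Set V)
    (hA : IsSplitModule G A) (hB : IsSplitModule G B)
    (hover : (A ∩ B).Nonempty ∧ (A \ B).Nonempty ∧ (B \ A).Nonempty) :
    IsSplitModule G (A ∪ B) ∧
      (A ∪ B ≠ Set.univ → IsSplitModule G (A ∩ B)) := by
  simp only [hconn.isSplitModule_iff] at hA hB ⊢
  exact ⟨hA.union hconn.preconnected hB hover.1, hA.inter hconn.preconnected hB⟩

/-- If `A` and `B` are overlapping split-modules of a connected finite
simple graph `G = (V,E)`, then `A ∪ B` is also a split-module of `G`. Moreover, if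
additionally `A ∪ B ≠ V`, then `A ∩ B` is also a split-module of `G`. -/
theorem splitModule_union_inter {V : Type*} [Fintype V] (G : SimpleGraph V)
    (hconn : G.Connected) (A B : Set V)
    (hA : IsSplitModule G A) (hB : IsSplitModule G B)
    (hover : (A ∩ B).Nonempty ∧ (A \ B).Nonempty ∧ (B \ A).Nonempty) :
    IsSplitModule G (A ∪ B) ∧
      (A ∪ B ≠ Set.univ → IsSplitModule G (A ∩ B)) :=
  splitModule_union_inter_general G hconn A B hA hB hover
end

section
/- Let k ∈ ℕ, let G = (V,E) be a finite simple graph, and let A, B be disjoint split-modules of G with A ∪ B = V. Let a, b ∈ V be such that a ∈ N(A) and b ∈ N(B). If max( rw(G[A ∪ {a}]), rw(G[B ∪ {b}]) ) ≤ k, then rw(G) ≤ k. -/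
open scoped Classical

/-- The cut-rank of `U`: the rank over GF(2) of the `U × (V ∖ U)` submatrix of the
adjacency matrix of `G` (padded with zeros, which does not change the rank). -/
noncomputable def cutRank {V : Type*} [Fintype V] (G : SimpleGraph V) (U : Set V) : ℕ :=
  Matrix.rank (Matrix.of fun u w : V =>
    if u ∈ U ∧ w ∉ U ∧ G.Adj u w then (1 : ZMod 2) else 0)

/-- A rank-decomposition of `G`: a finite tree `T` of maximum degree 3 together with a
bijection `toLeaf` from the vertices of `G` to the leaves (degree-1 vertices) of `T`. -/
structure RankDecomp {V : Type*} [Fintype V] (G : SimpleGraph V) where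
  L : Type
  fintypeL : Fintype L
  T : SimpleGraph L
  isTree : T.IsTree
  maxDeg : ∀ x : L, (T.neighborSet x).ncard ≤ 3
  toLeaf : V → L
  inj : Function.Injective toLeaf
  range_eq : Set.range toLeaf = {x : L | (T.neighborSet x).ncard = 1}

/-- The width of the rank-decomposition `D` is at most `k`: for every edge `xy` of `T`,
the cut-rank of the set of vertices of `G` whose leaves lie on the `x`-side of `T − xy`
is at most `k`. -/
def RankDecomp.WidthLE {V : Type*} [Fintype V] {G : SimpleGraph V}
    (D : RankDecomp G) (k : ℕ) : Prop :=
  ∀ x y : D.L, D.T.Adj x y →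
    cutRank G {v : V | (D.T.deleteEdges {s(x, y)}).Reachable (D.toLeaf v) x} ≤ k

/-- The rank-width of `G`: the least `k` admitting a rank-decomposition of width at
most `k` (graphs on at most one vertex, having no rank-decomposition, get rank-width 0). -/
noncomputable def rankWidth {V : Type*} [Fintype V] (G : SimpleGraph V) : ℕ :=
  sInf {k | ∃ D : RankDecomp G, D.WidthLE k}

/-!
Since `A` is a split-module and `B = V ∖ A`, the edges between `A` and `B` form a complete
bipartite graph between `N(B) ⊆ A` and `N(A) ⊆ B`. Hence every vertex of `N(A)` has the same
neighbours in `A` as `a`, and likewise every vertex of `N(B)` has the same neighbours in `B`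
as `b`.

Take rank-decompositions of `G[A ∪ {a}]` and `G[B ∪ {b}]` of optimal width and join the
leaves of `a` and `b` by a new edge. Cutting the joined tree at an old edge gives a cut of one
of the two decompositions, with `a` (or `b`) replaced by the whole other side. This does not
increase the cut-rank, because every vertex on that side either has no neighbour in `A`
(resp. `B`) or repeats the row of `a` (resp. `b`). The new edge induces the cut `{A, B}`, whose
cut-rank equals that of the leaf cut at `a`.
-/

open SimpleGraph

namespace SimpleGraph

variable {α β : Type*}

theorem Reachable.map_of_forall_adj {G : SimpleGraph α} {H : SimpleGraph β} (f : α → β)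
    (hf : ∀ ⦃u v⦄, G.Adj u v → H.Reachable (f u) (f v)) {u v : α} (h : G.Reachable u v) :
    H.Reachable (f u) (f v) := by
  rw [reachable_iff_reflTransGen] at h ⊢
  exact Relation.ReflTransGen.lift' f
    (fun x y hxy => (reachable_iff_reflTransGen _ _).mp (hf hxy)) _ _ h

theorem reachable_sum_iff {T₁ : SimpleGraph α} {T₂ : SimpleGraph β} (h₁ : T₁.Preconnected)
    (h₂ : T₂.Preconnected) {p q : α ⊕ β} : (T₁ ⊕g T₂).Reachable p q ↔ p.isLeft = q.isLeft := by
  rcases p with u | u <;> rcases q with v | v <;> simp only [Sum.isLeft_inl, Sum.isLeft_inr]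
  · exact iff_of_true ((h₁ u v).map Embedding.sumInl.toHom) trivial
  · exact iff_of_false (not_reachable_sum_inl_inr u v) (by simp)
  · exact iff_of_false (fun h => not_reachable_sum_inl_inr v u h.symm) (by simp)
  · exact iff_of_true ((h₂ u v).map Embedding.sumInr.toHom) trivial

theorem ncard_neighborSet_starGraph_none {n : ℕ} (x : Option (Fin n)) :
    ((starGraph none).neighborSet x).ncard = if x = none then n else 1 := by
  rcases x with _ | i
  · have : (starGraph none).neighborSet (none : Option (Fin n)) = Set.range some := by
      ext (_ | j) <;> simp
    rw [this, Set.ncard_range_of_injective (Option.some_injective _), Nat.card_eq_fintype_card,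
      Fintype.card_fin, if_pos rfl]
  · have : (starGraph none).neighborSet (some i) = {none} := by
      ext (_ | j) <;> simp
    rw [this, Set.ncard_singleton, if_neg (Option.some_ne_none i)]

section SumSupEdge

variable (T₁ : SimpleGraph α) (T₂ : SimpleGraph β) (l₁ : α) (l₂ : β)

theorem reachable_deleteEdges_sum_sup_edge_iff (h₁ : T₁.Preconnected) (h₂ : T₂.Preconnected)
    {p q : α ⊕ β} :
    ((T₁.sum T₂ ⊔ edge (.inl l₁) (.inr l₂)).deleteEdges {s(.inl l₁, .inr l₂)}).Reachable p q ↔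
      p.isLeft = q.isLeft := by
  have : (T₁.sum T₂ ⊔ edge (.inl l₁) (.inr l₂)).deleteEdges {s(.inl l₁, .inr l₂)} =
      T₁.sum T₂ := by
    ext (u | u) (v | v) <;> simp
  rw [this, reachable_sum_iff h₁ h₂]

theorem reachable_deleteEdges_sum_sup_edge_iff' (h₁ : T₁.Preconnected) (h₂ : T₂.Preconnected)
    {p q : α ⊕ β} :
    ((T₁.sum T₂ ⊔ edge (.inl l₁) (.inr l₂)).deleteEdges {s(.inr l₂, .inl l₁)}).Reachable p q ↔
      p.isLeft = q.isLeft := by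
  rw [Sym2.eq_swap, reachable_deleteEdges_sum_sup_edge_iff _ _ _ _ h₁ h₂]

theorem reachable_deleteEdges_sum_sup_edge_inl_iff (h₂ : T₂.Preconnected) {x y z : α}
    {p : α ⊕ β} :
    ((T₁.sum T₂ ⊔ edge (.inl l₁) (.inr l₂)).deleteEdges {s(.inl x, .inl y)}).Reachable p
        (.inl z) ↔
      (T₁.deleteEdges {s(x, y)}).Reachable (p.elim id fun _ => l₁) z := by
  set J := (T₁.sum T₂ ⊔ edge (.inl l₁) (.inr l₂)).deleteEdges {s(.inl x, .inl y)}
  have lift₁ : ∀ {u v : α}, (T₁.deleteEdges {s(x, y)}).Reachable u v →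
      J.Reachable (.inl u) (.inl v) :=
    Reachable.map_of_forall_adj _ fun u v h => Adj.reachable (by simpa [J, edge_adj] using h)
  constructor
  · refine Reachable.map_of_forall_adj (fun p : α ⊕ β => p.elim id fun _ => l₁) ?_
    rintro (u | u) (v | v) huv
    · exact Adj.reachable (by simpa [J, edge_adj] using huv)
    all_goals simp_all [J, edge_adj]
  · refine fun h => Reachable.trans ?_ (lift₁ h)
    rcases p with u | w
    · rfl
    · have hw : J.Reachable (.inr w) (.inr l₂) :=
        (h₂ w l₂).map_of_forall_adj _ fun u v h => Adj.reachable (by simpa [J, edge_adj] using h)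
      exact hw.trans (Adj.reachable (by simp [J, edge_adj]))

theorem reachable_deleteEdges_sum_sup_edge_inr_iff (h₁ : T₁.Preconnected) {x y z : β}
    {p : α ⊕ β} :
    ((T₁.sum T₂ ⊔ edge (.inl l₁) (.inr l₂)).deleteEdges {s(.inr x, .inr y)}).Reachable p
        (.inr z) ↔
      (T₂.deleteEdges {s(x, y)}).Reachable (p.elim (fun _ => l₂) id) z := by
  let φ : (T₁.sum T₂ ⊔ edge (.inl l₁) (.inr l₂)).deleteEdges {s(.inr x, .inr y)} ≃g
      (T₂.sum T₁ ⊔ edge (.inl l₂) (.inr l₁)).deleteEdges {s(.inl x, .inl y)} :=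
    ⟨Equiv.sumComm α β, by rintro (u | u) (v | v) <;> simp [edge_adj]⟩
  rw [← φ.reachable_iff]
  rcases p with u | u <;> exact reachable_deleteEdges_sum_sup_edge_inl_iff T₂ T₁ l₂ l₁ h₁

variable {T₁ T₂ l₁ l₂}

theorem IsTree.sum_sup_edge (h₁ : T₁.IsTree) (h₂ : T₂.IsTree) :
    (T₁.sum T₂ ⊔ edge (.inl l₁) (.inr l₂)).IsTree := by
  have c₁ := h₁.connected.preconnected
  have c₂ := h₂.connected.preconnected
  refine ⟨h₁.connected.sum_sup_edge h₂.connected, isAcyclic_iff_forall_adj_isBridge.mpr ?_⟩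
  rintro (u | u) (v | v) huv <;> rw [isBridge_iff]
  · rw [reachable_deleteEdges_sum_sup_edge_inl_iff _ _ _ _ c₂]
    exact isAcyclic_iff_forall_adj_isBridge.mp h₁.isAcyclic (by simpa [edge_adj] using huv)
  · obtain ⟨rfl, rfl⟩ : u = l₁ ∧ v = l₂ := by simpa [edge_adj] using huv
    rw [reachable_deleteEdges_sum_sup_edge_iff _ _ _ _ c₁ c₂]
    simp
  · obtain ⟨rfl, rfl⟩ : u = l₂ ∧ v = l₁ := by simpa [edge_adj] using huv
    rw [reachable_deleteEdges_sum_sup_edge_iff' _ _ _ _ c₁ c₂]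
    simp
  · rw [reachable_deleteEdges_sum_sup_edge_inr_iff _ _ _ _ c₁]
    exact isAcyclic_iff_forall_adj_isBridge.mp h₂.isAcyclic (by simpa [edge_adj] using huv)

theorem ncard_neighborSet_sum_sup_edge_inl [Finite α] (x : α) :
    ((T₁.sum T₂ ⊔ edge (.inl l₁) (.inr l₂)).neighborSet (.inl x)).ncard =
      (T₁.neighborSet x).ncard + if x = l₁ then 1 else 0 := by
  split_ifs with hx
  · subst hx
    have : (T₁.sum T₂ ⊔ edge (.inl x) (.inr l₂)).neighborSet (.inl x) =
        insert (.inr l₂) (Sum.inl '' T₁.neighborSet x) := by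
      ext (v | v) <;> simp [edge_adj]
    rw [this, Set.ncard_insert_of_notMem (by simp),
      Set.ncard_image_of_injective _ Sum.inl_injective]
  · have : (T₁.sum T₂ ⊔ edge (.inl l₁) (.inr l₂)).neighborSet (.inl x) =
        Sum.inl '' T₁.neighborSet x := by
      ext (v | v) <;> simp [edge_adj, hx]
    rw [this, Set.ncard_image_of_injective _ Sum.inl_injective, add_zero]

theorem ncard_neighborSet_sum_sup_edge_inr [Finite β] (y : β) :
    ((T₁.sum T₂ ⊔ edge (.inl l₁) (.inr l₂)).neighborSet (.inr y)).ncard =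
      (T₂.neighborSet y).ncard + if y = l₂ then 1 else 0 := by
  split_ifs with hy
  · subst hy
    have : (T₁.sum T₂ ⊔ edge (.inl l₁) (.inr y)).neighborSet (.inr y) =
        insert (.inl l₁) (Sum.inr '' T₂.neighborSet y) := by
      ext (v | v) <;> simp [edge_adj]
    rw [this, Set.ncard_insert_of_notMem (by simp),
      Set.ncard_image_of_injective _ Sum.inr_injective]
  · have : (T₁.sum T₂ ⊔ edge (.inl l₁) (.inr l₂)).neighborSet (.inr y) =
        Sum.inr '' T₂.neighborSet y := by
      ext (v | v) <;> simp [edge_adj, hy]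
    rw [this, Set.ncard_image_of_injective _ Sum.inr_injective, add_zero]

end SumSupEdge

end SimpleGraph

section Collapse

variable {V : Type*} {A : Set V} {a : V}

noncomputable def collapseCompl (A : Set V) (a v : V) : ↥(insert a A) :=
  if h : v ∈ A then ⟨v, Set.mem_insert_of_mem a h⟩ else ⟨a, Set.mem_insert a A⟩

theorem preimage_collapseCompl_singleton (ha : a ∉ A) :
    collapseCompl A a ⁻¹' {⟨a, Set.mem_insert a A⟩} = Aᶜ := by
  ext v
  by_cases hv : v ∈ A <;> simp only [collapseCompl, hv, Set.mem_preimage, Set.mem_singleton_iff,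
    Set.mem_compl_iff, not_true_eq_false, not_false_eq_true, dite_true, dite_false,
    iff_false, Subtype.mk.injEq]
  exact fun h => ha (h ▸ hv)

theorem exists_collapseCompl_eq_iff (ha : a ∉ A) (w : ↥(insert a A)) :
    (∃ v ∈ A, collapseCompl A a v = w) ↔ w ≠ ⟨a, Set.mem_insert a A⟩ := by
  constructor
  · rintro ⟨v, hv, rfl⟩ h
    simp only [collapseCompl, hv, dite_true, Subtype.mk.injEq] at h
    exact ha (h ▸ hv)
  · obtain ⟨w, hw⟩ := w
    intro h
    have hwA : w ∈ A := hw.resolve_left fun hwa => h (by simp [hwa])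
    exact ⟨w, hwA, by simp [collapseCompl, hwA]⟩

end Collapse

section CutRank

variable {V : Type*} [Fintype V] (G : SimpleGraph V)

theorem cutRank_compl (U : Set V) : cutRank G Uᶜ = cutRank G U := by
  rw [cutRank, cutRank, ← Matrix.rank_transpose]
  congr 1
  ext u w
  simp only [Matrix.transpose_apply, Matrix.of_apply, Set.mem_compl_iff, not_not, G.adj_comm u w]
  exact if_congr (by tauto) rfl rfl

theorem cutRank_le_card (U : Set V) : cutRank G U ≤ Fintype.card V :=
  Matrix.rank_le_card_height _

theorem cutRank_preimage_collapseCompl_le {A : Set V} {a : V}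
    (hrep : ∀ u ∈ extNbhd G A, ∀ w ∈ A, G.Adj u w ↔ G.Adj a w) (X : Set ↥(insert a A)) :
    cutRank G (collapseCompl A a ⁻¹' X) ≤ cutRank (G.induce (insert a A)) X := by
  wlog haX : ⟨a, Set.mem_insert a A⟩ ∈ X generalizing X
  · simpa only [Set.preimage_compl, cutRank_compl] using this Xᶜ haX
  set r := collapseCompl A a
  set N : Matrix ↥(insert a A) ↥(insert a A) (ZMod 2) := Matrix.of fun s t =>
    if s ∈ X ∧ t ∉ X ∧ (G.induce (insert a A)).Adj s t then 1 else 0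
  let d : V → ZMod 2 := fun u => if ∃ w ∈ A, G.Adj u w then 1 else 0
  -- Row `u` of the cut matrix is row `r u` of `N`, or zero if `u` has no neighbour in `A`.
  have hM : (Matrix.of fun u w : V =>
        if u ∈ r ⁻¹' X ∧ w ∉ r ⁻¹' X ∧ G.Adj u w then (1 : ZMod 2) else 0) =
      Matrix.diagonal d * N.submatrix r r := by
    ext u w
    rw [Matrix.diagonal_mul]
    by_cases hw : w ∈ A
    · by_cases hu : u ∈ A
      · by_cases hadj : G.Adj u w
        · have hN : ∃ x ∈ A, G.Adj u x := ⟨w, hw, hadj⟩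
          simp [N, r, d, collapseCompl, hu, hw, hadj, hN]
        · simp [N, r, d, collapseCompl, hu, hw, hadj]
      · by_cases hN : ∃ x ∈ A, G.Adj u x
        · simp [N, r, d, collapseCompl, hu, hw, hN, haX, hrep u ⟨hu, hN⟩ w hw]
        · have : ¬ G.Adj u w := fun h => hN ⟨w, hw, h⟩
          simp [N, r, d, collapseCompl, hu, hw, hN, this]
    · simp [N, r, collapseCompl, hw, haX]
  calc cutRank G (r ⁻¹' X) = (Matrix.diagonal d * N.submatrix r r).rank := by rw [cutRank, hM]
    _ ≤ (N.submatrix r r).rank := Matrix.rank_mul_le_right _ _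
    _ ≤ cutRank (G.induce (insert a A)) X := Matrix.rank_submatrix_le N r r

end CutRank

section SplitModule

variable {V : Type*} {G : SimpleGraph V} {A : Set V}

theorem IsSplitModule.adj_iff (hA : IsSplitModule G A) {u w : V} (hu : u ∈ A) (hw : w ∉ A) :
    G.Adj u w ↔ u ∈ extNbhd G Aᶜ ∧ w ∈ extNbhd G A := by
  refine ⟨fun h => ⟨⟨not_not.mpr hu, w, hw, h⟩, hw, u, hu, h.symm⟩, ?_⟩
  rintro ⟨⟨-, w', hw', huw'⟩, -, t, ht, hwt⟩
  rcases hA with rfl | rfl | ⟨c, hsub, hsplit⟩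
  · exact absurd (Set.mem_univ w) hw
  · exact absurd hu (Set.notMem_empty u)
  have mem : ∀ {x y}, G.Adj x y → x ∈ c.supp → y ∈ c.supp := fun h hx =>
    (ConnectedComponent.connectedComponentMk_eq_of_adj h).symm.trans hx
  have hwc : w ∈ c.supp := mem hwt.symm (hsub ht)
  exact (hsplit u ⟨hsub hu, fun h => h.2 hu, w', ⟨mem huw' (hsub hu), hw'⟩, huw'⟩
    t ⟨hsub ht, fun h => h.2 ht, w, ⟨hwc, hw⟩, hwt.symm⟩ w ⟨hwc, hw, t, ht, hwt⟩).mpr hwt.symm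

theorem IsSplitModule.adj_iff_adj (hA : IsSplitModule G A) {u u' w : V}
    (hu : u ∈ extNbhd G A) (hu' : u' ∈ extNbhd G A) (hw : w ∈ A) :
    G.Adj u w ↔ G.Adj u' w := by
  rw [G.adj_comm, G.adj_comm u', hA.adj_iff hw hu.1, hA.adj_iff hw hu'.1]
  simp [hu, hu']

theorem IsSplitModule.adj_iff_adj_of_compl (hA : IsSplitModule G A) {u u' w : V}
    (hu : u ∈ extNbhd G Aᶜ) (hu' : u' ∈ extNbhd G Aᶜ) (hw : w ∉ A) :
    G.Adj u w ↔ G.Adj u' w := by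
  rw [hA.adj_iff (not_not.mp hu.1) hw, hA.adj_iff (not_not.mp hu'.1) hw]
  simp [hu, hu']

end SplitModule

namespace RankDecomp

section Leaves

variable {W : Type*} [Fintype W] {H : SimpleGraph W} (D : RankDecomp H)

def side (x y : D.L) : Set W :=
  {v | (D.T.deleteEdges {s(x, y)}).Reachable (D.toLeaf v) x}

theorem widthLE_iff (k : ℕ) : D.WidthLE k ↔ ∀ x y, D.T.Adj x y → cutRank H (D.side x y) ≤ k :=
  Iff.rfl

theorem rankWidth_le {k : ℕ} (h : D.WidthLE k) : rankWidth H ≤ k :=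
  Nat.sInf_le (show k ∈ {k | ∃ D : RankDecomp H, D.WidthLE k} from ⟨D, h⟩)

theorem ncard_neighborSet_toLeaf (w : W) : (D.T.neighborSet (D.toLeaf w)).ncard = 1 :=
  (D.range_eq ▸ Set.mem_range_self w :)

theorem exists_adj_toLeaf (w : W) : ∃ y, D.T.Adj (D.toLeaf w) y := by
  obtain ⟨y, hy⟩ := Set.ncard_eq_one.mp (D.ncard_neighborSet_toLeaf w)
  exact ⟨y, (hy ▸ Set.mem_singleton y : y ∈ D.T.neighborSet _)⟩

theorem neighborSet_toLeaf {w : W} {y : D.L} (hy : D.T.Adj (D.toLeaf w) y) :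
    D.T.neighborSet (D.toLeaf w) = {y} := by
  obtain ⟨z, hz⟩ := Set.ncard_eq_one.mp (D.ncard_neighborSet_toLeaf w)
  have : y ∈ ({z} : Set D.L) := hz ▸ hy
  rwa [Set.mem_singleton_iff.mp this]

theorem side_toLeaf {w : W} {y : D.L} (hy : D.T.Adj (D.toLeaf w) y) :
    D.side (D.toLeaf w) y = {w} := by
  have hN : ∀ z, D.T.Adj (D.toLeaf w) z ↔ z = y := fun z => by
    rw [← mem_neighborSet, D.neighborSet_toLeaf hy, Set.mem_singleton_iff]
  ext v
  refine ⟨fun h => D.inj (by_contra fun hne => ?_), fun h => h ▸ Reachable.refl _⟩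
  refine not_reachable_of_neighborSet_right_eq_empty hne ?_ h
  ext z
  simp +contextual [hN]

theorem ncard_neighborSet_add_le_three (w : W) (x : D.L) :
    (D.T.neighborSet x).ncard + (if x = D.toLeaf w then 1 else 0) ≤ 3 := by
  split_ifs with hx
  · rw [hx, D.ncard_neighborSet_toLeaf]; omega
  · simpa using D.maxDeg x

theorem ncard_neighborSet_add_eq_one_iff (w₀ : W) (x : D.L) :
    (D.T.neighborSet x).ncard + (if x = D.toLeaf w₀ then 1 else 0) = 1 ↔
      ∃ w ≠ w₀, D.toLeaf w = x := by
  split_ifs with hx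
  · subst hx
    simp only [D.ncard_neighborSet_toLeaf, Nat.reduceAdd, OfNat.ofNat_ne_one, false_iff]
    exact fun ⟨w, hw, h⟩ => hw (D.inj h)
  · rw [add_zero]
    change x ∈ {x | (D.T.neighborSet x).ncard = 1} ↔ _
    rw [← D.range_eq]
    exact ⟨fun ⟨w, hw⟩ => ⟨w, fun h => hx (h ▸ hw.symm), hw⟩, fun ⟨w, _, hw⟩ => ⟨w, hw⟩⟩

end Leaves

section Join

variable {V : Type*} [Fintype V] {A B : Set V} {a b : V}
  [Fintype ↥(insert a A)] [Fintype ↥(insert b B)]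
  {G₁ : SimpleGraph ↥(insert a A)} {G₂ : SimpleGraph ↥(insert b B)}

noncomputable def join (D₁ : RankDecomp G₁) (D₂ : RankDecomp G₂) (hAB : IsCompl A B)
    (ha : a ∉ A) (hb : b ∉ B) (G : SimpleGraph V) : RankDecomp G where
  L := D₁.L ⊕ D₂.L
  fintypeL := @instFintypeSum _ _ D₁.fintypeL D₂.fintypeL
  T := D₁.T.sum D₂.T ⊔ edge (.inl (D₁.toLeaf ⟨a, Set.mem_insert a A⟩))
    (.inr (D₂.toLeaf ⟨b, Set.mem_insert b B⟩))
  isTree := D₁.isTree.sum_sup_edge D₂.isTree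
  maxDeg := by
    have := D₁.fintypeL
    have := D₂.fintypeL
    rintro (x | y)
    · rw [ncard_neighborSet_sum_sup_edge_inl]
      exact D₁.ncard_neighborSet_add_le_three _ x
    · rw [ncard_neighborSet_sum_sup_edge_inr]
      exact D₂.ncard_neighborSet_add_le_three _ y
  toLeaf v := if v ∈ A then .inl (D₁.toLeaf (collapseCompl A a v))
    else .inr (D₂.toLeaf (collapseCompl B b v))
  inj u v h := by
    by_cases hu : u ∈ A <;> by_cases hv : v ∈ A <;> simp only [hu, hv, if_true, if_false,
      Sum.inl.injEq, Sum.inr.injEq, reduceCtorEq] at h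
    · simpa [collapseCompl, hu, hv] using congrArg Subtype.val (D₁.inj h)
    · have hu' : u ∈ B := hAB.compl_eq ▸ hu
      have hv' : v ∈ B := hAB.compl_eq ▸ hv
      simpa [collapseCompl, hu', hv'] using congrArg Subtype.val (D₂.inj h)
  range_eq := by
    have := D₁.fintypeL
    have := D₂.fintypeL
    have hB : ∀ v, v ∈ B ↔ v ∉ A := fun v => by rw [← hAB.compl_eq]; rfl
    ext (x | y)
    · rw [Set.mem_ofPred_eq, ncard_neighborSet_sum_sup_edge_inl,
        D₁.ncard_neighborSet_add_eq_one_iff]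
      simp only [Set.mem_range, ← exists_collapseCompl_eq_iff ha]
      constructor
      · rintro ⟨v, hv⟩
        by_cases hvA : v ∈ A <;>
          simp only [hvA, if_true, if_false, Sum.inl.injEq, reduceCtorEq] at hv
        exact ⟨_, ⟨v, hvA, rfl⟩, hv⟩
      · rintro ⟨_, ⟨v, hvA, rfl⟩, rfl⟩
        exact ⟨v, by simp [hvA]⟩
    · rw [Set.mem_ofPred_eq, ncard_neighborSet_sum_sup_edge_inr,
        D₂.ncard_neighborSet_add_eq_one_iff]
      simp only [Set.mem_range, ← exists_collapseCompl_eq_iff hb]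
      constructor
      · rintro ⟨v, hv⟩
        by_cases hvA : v ∈ A <;>
          simp only [hvA, if_true, if_false, Sum.inr.injEq, reduceCtorEq] at hv
        exact ⟨_, ⟨v, (hB v).mpr hvA, rfl⟩, hv⟩
      · rintro ⟨_, ⟨v, hvB, rfl⟩, rfl⟩
        exact ⟨v, by simp [(hB v).mp hvB]⟩

variable (D₁ : RankDecomp G₁) (D₂ : RankDecomp G₂) (hAB : IsCompl A B) (ha : a ∉ A)
  (hb : b ∉ B) (G : SimpleGraph V)

theorem side_join_inl (x y : D₁.L) :
    (D₁.join D₂ hAB ha hb G).side (.inl x) (.inl y) = collapseCompl A a ⁻¹' D₁.side x y := by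
  ext v
  refine (reachable_deleteEdges_sum_sup_edge_inl_iff D₁.T D₂.T _ _
    D₂.isTree.connected.preconnected).trans ?_
  by_cases hv : v ∈ A <;> simp [join, hv, collapseCompl, side]

theorem side_join_inr (x y : D₂.L) :
    (D₁.join D₂ hAB ha hb G).side (.inr x) (.inr y) = collapseCompl B b ⁻¹' D₂.side x y := by
  ext v
  refine (reachable_deleteEdges_sum_sup_edge_inr_iff D₁.T D₂.T _ _
    D₁.isTree.connected.preconnected).trans ?_
  have hB : v ∈ B ↔ v ∉ A := by rw [← hAB.compl_eq]; rfl
  by_cases hv : v ∈ A <;> simp [join, hv, hB, collapseCompl, side]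

theorem side_join_bridge :
    (D₁.join D₂ hAB ha hb G).side (.inl (D₁.toLeaf ⟨a, Set.mem_insert a A⟩))
      (.inr (D₂.toLeaf ⟨b, Set.mem_insert b B⟩)) = A := by
  ext v
  refine (reachable_deleteEdges_sum_sup_edge_iff D₁.T D₂.T _ _ D₁.isTree.connected.preconnected
    D₂.isTree.connected.preconnected).trans ?_
  by_cases hv : v ∈ A <;> simp [join, hv]

theorem side_join_bridge_symm :
    (D₁.join D₂ hAB ha hb G).side (.inr (D₂.toLeaf ⟨b, Set.mem_insert b B⟩))
      (.inl (D₁.toLeaf ⟨a, Set.mem_insert a A⟩)) = B := by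
  ext v
  refine (reachable_deleteEdges_sum_sup_edge_iff' D₁.T D₂.T _ _ D₁.isTree.connected.preconnected
    D₂.isTree.connected.preconnected).trans ?_
  have hB : v ∈ B ↔ v ∉ A := by rw [← hAB.compl_eq]; rfl
  by_cases hv : v ∈ A <;> simp [join, hv, hB]

theorem widthLE_join {k : ℕ}
    (h₁ : ∀ x y, D₁.T.Adj x y → cutRank G (collapseCompl A a ⁻¹' D₁.side x y) ≤ k)
    (h₂ : ∀ x y, D₂.T.Adj x y → cutRank G (collapseCompl B b ⁻¹' D₂.side x y) ≤ k) :
    (D₁.join D₂ hAB ha hb G).WidthLE k := by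
  have hA : cutRank G A ≤ k := by
    obtain ⟨y, hy⟩ := D₁.exists_adj_toLeaf ⟨a, Set.mem_insert a A⟩
    simpa [D₁.side_toLeaf hy, preimage_collapseCompl_singleton ha, cutRank_compl]
      using h₁ _ _ hy
  rw [widthLE_iff]
  rintro (x | x) (y | y) hxy
  · rw [side_join_inl]
    exact h₁ x y (by simpa [join, edge_adj] using hxy)
  · obtain ⟨rfl, rfl⟩ : x = D₁.toLeaf ⟨a, _⟩ ∧ y = D₂.toLeaf ⟨b, _⟩ := by
      simpa [join, edge_adj] using hxy
    rwa [side_join_bridge]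
  · obtain ⟨rfl, rfl⟩ : x = D₂.toLeaf ⟨b, _⟩ ∧ y = D₁.toLeaf ⟨a, _⟩ := by
      simpa [join, edge_adj] using hxy
    rwa [side_join_bridge_symm, ← hAB.compl_eq, cutRank_compl]
  · rw [side_join_inr]
    exact h₂ x y (by simpa [join, edge_adj] using hxy)

end Join

section Existence

variable {W : Type*} [Fintype W]

noncomputable def star (H : SimpleGraph W) (h₂ : 2 ≤ Nat.card W) (h₃ : Nat.card W ≤ 3) :
    RankDecomp H where
  L := Option (Fin (Nat.card W))
  fintypeL := inferInstance
  T := starGraph none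
  isTree := isTree_starGraph none
  maxDeg x := by
    rw [ncard_neighborSet_starGraph_none]
    split_ifs <;> omega
  toLeaf w := some (Finite.equivFin W w)
  inj := (Option.some_injective _).comp (Finite.equivFin W).injective
  range_eq := by
    ext (_ | i)
    · simp only [Set.mem_range, reduceCtorEq, exists_false, false_iff]
      rw [Set.mem_ofPred_eq, ncard_neighborSet_starGraph_none, if_pos rfl]
      omega
    · simp only [Set.mem_range, Option.some.injEq]
      rw [Set.mem_ofPred_eq, ncard_neighborSet_starGraph_none, if_neg (Option.some_ne_none i)]
      exact iff_of_true ((Finite.equivFin W).surjective i) rfl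

theorem nonempty_of_two_le_card (H : SimpleGraph W) (h : 2 ≤ Nat.card W) :
    Nonempty (RankDecomp H) := by
  induction hn : Nat.card W using Nat.strong_induction_on generalizing W with
  | _ n ih =>
  subst hn
  by_cases h₃ : Nat.card W ≤ 3
  · exact ⟨star H h h₃⟩
  -- Join decompositions of `W ∖ {w}` (where `v` stands for `{v, w}`) and of `{u, v, w}`.
  obtain ⟨v, w, hvw⟩ := (Finite.one_lt_card_iff_nontrivial.mp h).exists_pair_ne
  have hB : ({v, w} : Set W).ncard = 2 := Set.ncard_pair hvw
  obtain ⟨u, hu⟩ : ∃ u, u ∉ ({v, w} : Set W) := by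
    by_contra! hall
    have := Set.ncard_univ W ▸ congrArg Set.ncard (Set.eq_univ_of_forall hall)
    omega
  have hv : v ∉ ({v, w} : Set W)ᶜ := by simp
  have h₁ : Nat.card ↥(insert v ({v, w} : Set W)ᶜ) = Nat.card W - 1 := by
    rw [Nat.card_coe_set_eq, Set.ncard_insert_of_notMem hv, Set.ncard_compl, hB]
    omega
  have h₂ : Nat.card ↥(insert u ({v, w} : Set W)) = 3 := by
    rw [Nat.card_coe_set_eq, Set.ncard_insert_of_notMem hu, hB]
  obtain ⟨D₁⟩ := ih _ (by omega) (⊥ : SimpleGraph ↥(insert v ({v, w} : Set W)ᶜ)) (by omega) h₁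
  obtain ⟨D₂⟩ := ih _ (by omega) (⊥ : SimpleGraph ↥(insert u ({v, w} : Set W))) (by omega) h₂
  exact ⟨D₁.join D₂ isCompl_compl.symm hv hu H⟩

theorem exists_widthLE_rankWidth (H : SimpleGraph W) (h : 2 ≤ Nat.card W) :
    ∃ D : RankDecomp H, D.WidthLE (rankWidth H) := by
  obtain ⟨D⟩ := nonempty_of_two_le_card H h
  exact Nat.sInf_mem (s := {k | ∃ D : RankDecomp H, D.WidthLE k})
    ⟨_, D, fun _ _ _ => cutRank_le_card H _⟩

end Existence

end RankDecomp

theorem two_le_ncard_insert_of_mem_extNbhd {V : Type*} [Finite V] {G : SimpleGraph V}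
    {A : Set V} {a : V} (ha : a ∈ extNbhd G A) : 2 ≤ (insert a A).ncard := by
  obtain ⟨haA, x, hx, -⟩ := ha
  rw [Set.ncard_insert_of_notMem haA]
  have := (Set.ncard_pos).mpr ⟨x, hx⟩
  omega

theorem rankWidth_of_two_splitModules_general {V : Type*} [Fintype V] (k : ℕ)
    (G : SimpleGraph V) (A B : Set V)
    (hA : IsSplitModule G A)
    (hAB : Disjoint A B) (hcover : A ∪ B = Set.univ)
    (a b : V) (ha : a ∈ extNbhd G A) (hb : b ∈ extNbhd G B)
    (hrw : max (rankWidth (G.induce (insert a A)))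
        (rankWidth (G.induce (insert b B))) ≤ k) :
    rankWidth G ≤ k := by
  have hAB' : IsCompl A B := ⟨hAB, codisjoint_iff.mpr hcover⟩
  obtain ⟨DA, hDA⟩ := RankDecomp.exists_widthLE_rankWidth (G.induce (insert a A))
    (two_le_ncard_insert_of_mem_extNbhd ha)
  obtain ⟨DB, hDB⟩ := RankDecomp.exists_widthLE_rankWidth (G.induce (insert b B))
    (two_le_ncard_insert_of_mem_extNbhd hb)
  refine (DA.join DB hAB' ha.1 hb.1 G).rankWidth_le (RankDecomp.widthLE_join _ _ _ _ _ _ ?_ ?_)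
  · intro x y hxy
    refine (cutRank_preimage_collapseCompl_le G
      (fun u hu w hw => hA.adj_iff_adj hu ha hw) _).trans ?_
    exact (hDA x y hxy).trans ((le_max_left _ _).trans hrw)
  · intro x y hxy
    obtain rfl : Aᶜ = B := hAB'.compl_eq
    refine (cutRank_preimage_collapseCompl_le G
      (fun u hu w hw => hA.adj_iff_adj_of_compl hu hb hw) _).trans ?_
    exact (hDB x y hxy).trans ((le_max_right _ _).trans hrw)

/-- Let `k ∈ ℕ`, let `G = (V,E)` be a finite simple graph, and let
`A, B` be disjoint split-modules of `G` with `A ∪ B = V`. Let `a, b ∈ V` be such that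
`a ∈ N(A)` and `b ∈ N(B)`. If `max(rw(G[A ∪ {a}]), rw(G[B ∪ {b}])) ≤ k`, then
`rw(G) ≤ k`. -/
theorem rankWidth_of_two_splitModules {V : Type*} [Fintype V] (k : ℕ)
    (G : SimpleGraph V) (A B : Set V)
    (hA : IsSplitModule G A) (hB : IsSplitModule G B)
    (hAB : Disjoint A B) (hcover : A ∪ B = Set.univ)
    (a b : V) (ha : a ∈ extNbhd G A) (hb : b ∈ extNbhd G B)
    (hrw : max (rankWidth (G.induce (insert a A)))
        (rankWidth (G.induce (insert b B))) ≤ k) :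
    rankWidth G ≤ k :=
  rankWidth_of_two_splitModules_general k G A B hA hAB hcover a b ha hb hrw
end

section
/- Let G be a finite simple graph on n vertices that is C₄-free and has maximum degree at most 3, let j ∈ ℕ, and let G' be the graph obtained from G by adding n + 2 pairwise vertex-disjoint new 4-cycles, a new vertex q adjacent to every vertex of every added 4-cycle, and a new vertex q' adjacent to q and to one fixed vertex of G. Then G has a dominating set of cardinality at most j if and only if there exists a set S ⊆ V(G') with |S| ≤ j + 1 such that S is a dominating set of G' or S intersects the vertex set of every induced 4-cycle of G'. -/
open scoped Classical

/-- `S` is a dominating set of `G`: every vertex is in `S` or has a neighbor in `S`. -/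
def IsDomSet {V : Type*} (G : SimpleGraph V) (S : Set V) : Prop :=
  ∀ v : V, v ∈ S ∨ ∃ w ∈ S, G.Adj v w

/-- The vertex set of the gadget graph: the vertices of `G`, together with `n + 2` new
4-cycles (`Fin (n+2) × Fin 4`), a new vertex `q = Sum.inr (Sum.inr (Sum.inl ()))` and a
new vertex `q' = Sum.inr (Sum.inr (Sum.inr ()))`. -/
abbrev GadgetVertex (V : Type*) (n : ℕ) : Type _ :=
  V ⊕ ((Fin (n + 2) × Fin 4) ⊕ (Unit ⊕ Unit))

/-- The gadget graph `G'` obtained from `G` by adding `n + 2` pairwise vertex-disjoint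
new 4-cycles, a new vertex `q` adjacent to every vertex of every added 4-cycle, and a
new vertex `q'` adjacent to `q` and to the fixed vertex `v₀` of `G`. -/
def gadget {V : Type*} (G : SimpleGraph V) (n : ℕ) (v₀ : V) :
    SimpleGraph (GadgetVertex V n) :=
  SimpleGraph.fromRel (fun x y =>
    match x, y with
    | Sum.inl v, Sum.inl w => G.Adj v w
    | Sum.inr (Sum.inl (i, a)), Sum.inr (Sum.inl (i', a')) =>
        i = i' ∧ (SimpleGraph.cycleGraph 4).Adj a a'
    | Sum.inr (Sum.inr (Sum.inl _)), Sum.inr (Sum.inl _) => True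
    | Sum.inr (Sum.inr (Sum.inl _)), Sum.inr (Sum.inr (Sum.inr _)) => True
    | Sum.inr (Sum.inr (Sum.inr _)), Sum.inl v => v = v₀
    | _, _ => False)

/-! If `j < n`, a set of size at most `j + 1` cannot meet all `n + 2` added 4-cycles, so the
"hitting" alternative never applies, and a dominating set of `G'` must contain `q`, the only
neighbour of an added cycle outside it. Conversely `D ∪ {q}` dominates `G'` when `D` dominates `G`, and a
dominating set `S ∋ q` of `G'` projects to a dominating set of `G` of size `|S| - 1` by replacing
`q'` with `v₀`. -/

namespace GadgetVertex

variable {V : Type*} {n : ℕ}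

abbrev q : GadgetVertex V n := Sum.inr (Sum.inr (Sum.inl ()))

abbrev q' : GadgetVertex V n := Sum.inr (Sum.inr (Sum.inr ()))

def cycleSet (i : Fin (n + 2)) : Set (GadgetVertex V n) :=
  Set.range fun a : Fin 4 => Sum.inr (Sum.inl (i, a))

end GadgetVertex

open GadgetVertex

section Gadget

variable {V : Type*} {G : SimpleGraph V} {n : ℕ} {v₀ : V}

lemma gadget_adj_inl_iff {v : V} {w : GadgetVertex V n} :
    (gadget G n v₀).Adj (Sum.inl v) w ↔ (∃ u, w = Sum.inl u ∧ G.Adj v u) ∨ (v = v₀ ∧ w = q') := by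
  rcases w with u | ⟨i, a⟩ | _ | _ <;>
    simp only [gadget, SimpleGraph.fromRel_adj] <;> aesop (add simp SimpleGraph.adj_comm)

lemma gadget_adj_cycle_iff {i : Fin (n + 2)} {a : Fin 4} {w : GadgetVertex V n} :
    (gadget G n v₀).Adj (Sum.inr (Sum.inl (i, a))) w ↔
      (∃ b, w = Sum.inr (Sum.inl (i, b)) ∧ (SimpleGraph.cycleGraph 4).Adj a b) ∨ w = q := by
  rcases w with u | ⟨i', b⟩ | _ | _ <;>
    simp only [gadget, SimpleGraph.fromRel_adj] <;> aesop (add simp SimpleGraph.adj_comm)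

lemma gadget_adj_q'_q : (gadget G n v₀).Adj q' q := by
  simp [gadget]

lemma nonempty_induce_cycleSet_iso (i : Fin (n + 2)) :
    Nonempty ((gadget G n v₀).induce (cycleSet i) ≃g SimpleGraph.cycleGraph 4) := by
  have hinj : Function.Injective fun a : Fin 4 => (Sum.inr (Sum.inl (i, a)) : GadgetVertex V n) :=
    fun a b h => by simpa using h
  refine ⟨SimpleGraph.Iso.symm ⟨Equiv.ofInjective _ hinj, fun {a b} => ?_⟩⟩
  change (gadget G n v₀).Adj (Sum.inr (Sum.inl (i, a))) (Sum.inr (Sum.inl (i, b))) ↔ _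
  simp [gadget_adj_cycle_iff]

lemma eq_of_mem_cycleSet {x : GadgetVertex V n} {i i' : Fin (n + 2)}
    (hi : x ∈ cycleSet i) (hi' : x ∈ cycleSet i') : i = i' := by
  obtain ⟨a, rfl⟩ := hi
  obtain ⟨b, hb⟩ := hi'
  simp_all

lemma add_two_le_ncard_of_meets_cycleSet [Finite V] {S : Set (GadgetVertex V n)}
    (hS : ∀ i, (S ∩ cycleSet i).Nonempty) : n + 2 ≤ S.ncard := by
  choose g hgS hgi using hS
  calc n + 2 = (Set.univ : Set (Fin (n + 2))).ncard := by simp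
    _ ≤ S.ncard := Set.ncard_le_ncard_of_injOn g (fun i _ => hgS i)
        (fun i _ i' _ h => eq_of_mem_cycleSet (hgi i) (h ▸ hgi i'))

lemma meets_cycleSet_of_isDomSet_gadget {S : Set (GadgetVertex V n)}
    (hS : IsDomSet (gadget G n v₀) S) (hq : q ∉ S) (i : Fin (n + 2)) :
    (S ∩ cycleSet i).Nonempty := by
  rcases hS (Sum.inr (Sum.inl (i, 0))) with h | ⟨w, hw, hadj⟩
  · exact ⟨_, h, 0, rfl⟩
  · rcases gadget_adj_cycle_iff.1 hadj with ⟨b, rfl, -⟩ | rfl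
    · exact ⟨_, hw, b, rfl⟩
    · exact absurd hw hq

lemma IsDomSet.gadget_image_inl_union_q {D : Set V} (hD : IsDomSet G D) :
    IsDomSet (gadget G n v₀) (Sum.inl '' D ∪ {q}) := by
  rintro (v | ⟨i, a⟩ | _ | _)
  · rcases hD v with hv | ⟨w, hw, hvw⟩
    · exact Or.inl (Or.inl (Set.mem_image_of_mem _ hv))
    · exact Or.inr ⟨Sum.inl w, Or.inl (Set.mem_image_of_mem _ hw),
        gadget_adj_inl_iff.2 (Or.inl ⟨w, rfl, hvw⟩)⟩
  · exact Or.inr ⟨q, Or.inr rfl, gadget_adj_cycle_iff.2 (Or.inr rfl)⟩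
  · exact Or.inl (Or.inr rfl)
  · exact Or.inr ⟨q, Or.inr rfl, gadget_adj_q'_q⟩

def collapse (v₀ : V) : GadgetVertex V n → V :=
  Sum.elim id fun _ => v₀

lemma IsDomSet.image_collapse {S : Set (GadgetVertex V n)} (hS : IsDomSet (gadget G n v₀) S) :
    IsDomSet G (collapse v₀ '' (S \ {q})) := by
  intro v
  rcases hS (Sum.inl v) with hv | ⟨w, hw, hadj⟩
  · exact Or.inl ⟨Sum.inl v, ⟨hv, Sum.inl_ne_inr⟩, rfl⟩
  · rcases gadget_adj_inl_iff.1 hadj with ⟨u, rfl, hvu⟩ | ⟨rfl, rfl⟩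
    · exact Or.inr ⟨u, ⟨Sum.inl u, ⟨hw, Sum.inl_ne_inr⟩, rfl⟩, hvu⟩
    · exact Or.inl ⟨q', ⟨hw, by simp⟩, rfl⟩

end Gadget

theorem gadget_domination_general {V : Type} [Fintype V] (G : SimpleGraph V) (v₀ : V) (j : ℕ) :
    (∃ D : Set V, IsDomSet G D ∧ D.ncard ≤ j) ↔
      ∃ S : Set (GadgetVertex V (Fintype.card V)),
        S.ncard ≤ j + 1 ∧
          (IsDomSet (gadget G (Fintype.card V) v₀) S ∨
            ∀ s : Set (GadgetVertex V (Fintype.card V)),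
              Nonempty ((gadget G (Fintype.card V) v₀).induce s ≃g
                SimpleGraph.cycleGraph 4) →
              (S ∩ s).Nonempty) := by
  constructor
  · rintro ⟨D, hD, hDj⟩
    refine ⟨Sum.inl '' D ∪ {q}, ?_, Or.inl hD.gadget_image_inl_union_q⟩
    calc _ ≤ (Sum.inl '' D).ncard + ({q} : Set _).ncard := Set.ncard_union_le _ _
      _ ≤ j + 1 := by
        rw [Set.ncard_image_of_injective _ Sum.inl_injective, Set.ncard_singleton]
        omega
  · rintro ⟨S, hSj, hS⟩
    by_cases hj : Fintype.card V ≤ j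
    · exact ⟨Set.univ, fun v => Or.inl trivial, by rwa [Set.ncard_univ, Nat.card_eq_fintype_card]⟩
    have hS_misses : ¬ ∀ i, (S ∩ cycleSet i).Nonempty := fun h => by
      have := add_two_le_ncard_of_meets_cycleSet h
      omega
    rcases hS with hdom | hhit
    · have hq : q ∈ S := by_contra fun hq => hS_misses (meets_cycleSet_of_isDomSet_gadget hdom hq)
      refine ⟨_, hdom.image_collapse, ?_⟩
      calc _ ≤ (S \ {q}).ncard := Set.ncard_image_le (Set.toFinite _)
        _ = S.ncard - 1 := Set.ncard_sdiff_singleton_of_mem hq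
        _ ≤ j := by omega
    · exact (hS_misses fun i => hhit _ (nonempty_induce_cycleSet_iso i)).elim

/-- Let `G` be a finite simple graph on `n` vertices that is `C₄`-free
and has maximum degree at most 3, let `j ∈ ℕ`, and let `G'` be the gadget graph obtained
from `G` (with fixed vertex `v₀`). Then `G` has a dominating set of cardinality at most
`j` iff there is a set `S ⊆ V(G')` with `|S| ≤ j + 1` such that `S` is a dominating set
of `G'` or `S` intersects the vertex set of every induced 4-cycle of `G'`. -/
theorem gadget_domination {V : Type} [Fintype V] (G : SimpleGraph V) (v₀ : V) (j : ℕ)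
    (hC4free : ¬ ∃ s : Set V, Nonempty (G.induce s ≃g SimpleGraph.cycleGraph 4))
    (hdeg : ∀ v : V, (G.neighborSet v).ncard ≤ 3) :
    (∃ D : Set V, IsDomSet G D ∧ D.ncard ≤ j) ↔
      ∃ S : Set (GadgetVertex V (Fintype.card V)),
        S.ncard ≤ j + 1 ∧
          (IsDomSet (gadget G (Fintype.card V) v₀) S ∨
            ∀ s : Set (GadgetVertex V (Fintype.card V)),
              Nonempty ((gadget G (Fintype.card V) v₀).induce s ≃g
                SimpleGraph.cycleGraph 4) →
              (S ∩ s).Nonempty) :=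
  gadget_domination_general G v₀ j
end
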